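/- arXiv:2604.18283 — 3 statements merged into one kernel-verified Lean document; each statement's English description precedes it below -/
import Mathlib

section
/- A finite set F of bipartitions of [k] is laminar if and only if there exists a choice of one side for each bipartition in F such that the chosen sides form a laminar family of sets (any two chosen sides are either nested or disjoint). Concretely: fix a bipartition S₀|S̄₀ in F with |S₀| maximal; choosing for each bipartition S|S̄ the side S if S ⊆ S₀ and S̄ otherwise yields such a laminar family. -/
open Finset

lemma aux10 (k : ℕ) (F : Finset (Finset ℕ))
    (hF : ∀ S ∈ F, S ⊆ range k ∧ S.Nonempty ∧ S ≠ range k)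
    (S₀ : Finset ℕ)
    (hmem : S₀ ∈ F ∨ range k \ S₀ ∈ F) (hsub0 : S₀ ⊆ range k)
    (hmax : ∀ S ∈ F, S.card ≤ S₀.card ∧ (range k \ S).card ≤ S₀.card)
    (hlam : ∀ S ∈ F, ∀ T ∈ F,
        ∃ A ∈ ({S, range k \ S} : Set (Finset ℕ)),
          ∃ B ∈ ({T, range k \ T} : Set (Finset ℕ)), A ⊆ B) :
    ∀ S ∈ F, ∀ T ∈ F,
        (if S ⊆ S₀ then S else range k \ S) ⊆ (if T ⊆ S₀ then T else range k \ T) ∨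
        (if T ⊆ S₀ then T else range k \ T) ⊆ (if S ⊆ S₀ then S else range k \ S) ∨
        Disjoint (if S ⊆ S₀ then S else range k \ S)
          (if T ⊆ S₀ then T else range k \ T) := by
  have hne : S₀ ≠ range k := by
    rcases hmem with h | h
    · exact (hF S₀ h).2.2
    · intro h'
      have := (hF _ h).2.1
      rw [h', sdiff_self] at this
      exact this.ne_empty rfl
  have hdd : range k \ (range k \ S₀) = S₀ := by
    rw [sdiff_sdiff_right_self, inf_eq_inter, (inter_eq_right).2 hsub0]
  -- every chosen side is contained in S₀
  have hc : ∀ S ∈ F, (if S ⊆ S₀ then S else range k \ S) ⊆ S₀ := by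
    intro S hS
    obtain ⟨hSr, hSne, hSne'⟩ := hF S hS
    have hl : (S ⊆ S₀ ∨ S ⊆ range k \ S₀) ∨
        (range k \ S ⊆ S₀ ∨ range k \ S ⊆ range k \ S₀) := by
      rcases hmem with h0 | h0
      · obtain ⟨A, hA, B, hB, hAB⟩ := hlam S hS S₀ h0
        simp only [Set.mem_insert_iff, Set.mem_singleton_iff] at hA hB
        rcases hA with rfl | rfl
        · rcases hB with rfl | rfl
          · exact Or.inl (Or.inl hAB)
          · exact Or.inl (Or.inr hAB)
        · rcases hB with rfl | rfl
          · exact Or.inr (Or.inl hAB)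
          · exact Or.inr (Or.inr hAB)
      · obtain ⟨A, hA, B, hB, hAB⟩ := hlam S hS (range k \ S₀) h0
        simp only [Set.mem_insert_iff, Set.mem_singleton_iff, hdd] at hA hB
        rcases hA with rfl | rfl
        · rcases hB with rfl | rfl
          · exact Or.inl (Or.inr hAB)
          · exact Or.inl (Or.inl hAB)
        · rcases hB with rfl | rfl
          · exact Or.inr (Or.inr hAB)
          · exact Or.inr (Or.inl hAB)
    rcases hl with (h | h) | (h | h)
    · rw [if_pos h]; exact h
    · -- S ⊆ range k \ S₀, so S₀ = range k \ S by maximality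
      have hdisj : Disjoint S S₀ := (Finset.sdiff_disjoint).mono_left h
      have h1 : S₀ ⊆ range k \ S := subset_sdiff.2 ⟨hsub0, hdisj.symm⟩
      have h2 : S₀ = range k \ S :=
        Finset.eq_of_subset_of_card_le h1 (hmax S hS).2
      have hns : ¬ S ⊆ S₀ := by
        intro hss
        have : S ⊆ S ∩ S₀ := subset_inter (Finset.Subset.refl S) hss
        rw [(disjoint_iff_inter_eq_empty).1 hdisj] at this
        exact hSne.ne_empty (Finset.subset_empty.1 this)
      rw [if_neg hns, ← h2]
    · -- range k \ S ⊆ S₀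
      have hns : ¬ S ⊆ S₀ := by
        intro hss
        apply hne
        apply Finset.Subset.antisymm hsub0
        intro x hx
        by_cases hxS : x ∈ S
        · exact hss hxS
        · exact h (mem_sdiff.2 ⟨hx, hxS⟩)
      rw [if_neg hns]; exact h
    · -- range k \ S ⊆ range k \ S₀, so S₀ ⊆ S, so S = S₀ by maximality
      have h1 : S₀ ⊆ S := by
        intro x hx
        by_contra hxS
        exact (mem_sdiff.1 (h (mem_sdiff.2 ⟨hsub0 hx, hxS⟩))).2 hx
      have h2 : S₀ = S := Finset.eq_of_subset_of_card_le h1 (hmax S hS).1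
      have hss : S ⊆ S₀ := by rw [h2]
      rw [if_pos hss, h2]
  -- main argument
  intro S hS T hT
  have hSr := (hF S hS).1
  have hTr := (hF T hT).1
  have hcS : (if S ⊆ S₀ then S else range k \ S) ⊆ S₀ := hc S hS
  have hcT : (if T ⊆ S₀ then T else range k \ T) ⊆ S₀ := hc T hT
  obtain ⟨A, hA, B, hB, hAB⟩ := hlam S hS T hT
  simp only [Set.mem_insert_iff, Set.mem_singleton_iff] at hA hB
  have hAc : A = (if S ⊆ S₀ then S else range k \ S) ∨
      A = range k \ (if S ⊆ S₀ then S else range k \ S) := by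
    split_ifs with h
    · exact hA
    · rcases hA with rfl | rfl
      · right
        rw [sdiff_sdiff_right_self, inf_eq_inter, (inter_eq_right).2 hSr]
      · left; rfl
  have hBc : B = (if T ⊆ S₀ then T else range k \ T) ∨
      B = range k \ (if T ⊆ S₀ then T else range k \ T) := by
    split_ifs with h
    · exact hB
    · rcases hB with rfl | rfl
      · right
        rw [sdiff_sdiff_right_self, inf_eq_inter, (inter_eq_right).2 hTr]
      · left; rfl
  set cS := if S ⊆ S₀ then S else range k \ S with hcSdef
  set cT := if T ⊆ S₀ then T else range k \ T with hcTdef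
  rcases hAc with rfl | rfl
  · rcases hBc with rfl | rfl
    · exact Or.inl hAB
    · exact Or.inr (Or.inr ((Finset.sdiff_disjoint).mono_left hAB))
  · rcases hBc with rfl | rfl
    · -- range k \ cS ⊆ cT : then range k ⊆ S₀, contradiction
      exfalso
      apply hne
      apply Finset.Subset.antisymm hsub0
      intro x hx
      by_cases hxS : x ∈ cS
      · exact hcS hxS
      · exact hcT (hAB (mem_sdiff.2 ⟨hx, hxS⟩))
    · -- range k \ cS ⊆ range k \ cT : then cT ⊆ cS
      refine Or.inr (Or.inl ?_)
      intro x hx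
      by_contra hxS
      exact (mem_sdiff.1 (hAB (mem_sdiff.2 ⟨hsub0 (hcT hx), hxS⟩))).2 hx
  

/-- A finite set of bipartitions of `[k]` (each represented by one side) is laminar
iff one can choose a side of each bipartition so that the chosen sides form a laminar
family (pairwise nested or disjoint).  Moreover, choosing `S` when `S ⊆ S₀` and the
complement otherwise, for a bipartition side `S₀` of maximal cardinality, yields such
a laminar family. -/
theorem stmt10 (k : ℕ) (F : Finset (Finset ℕ))
    (hF : ∀ S ∈ F, S ⊆ range k ∧ S.Nonempty ∧ S ≠ range k) :
    ((∀ S ∈ F, ∀ T ∈ F,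
        ∃ A ∈ ({S, range k \ S} : Set (Finset ℕ)),
          ∃ B ∈ ({T, range k \ T} : Set (Finset ℕ)), A ⊆ B) ↔
      ∃ c : Finset ℕ → Finset ℕ,
        (∀ S ∈ F, c S = S ∨ c S = range k \ S) ∧
        (∀ S ∈ F, ∀ T ∈ F, c S ⊆ c T ∨ c T ⊆ c S ∨ Disjoint (c S) (c T))) ∧
    (∀ S₀ : Finset ℕ,
      (S₀ ∈ F ∨ range k \ S₀ ∈ F) → S₀ ⊆ range k →
      (∀ S ∈ F, S.card ≤ S₀.card ∧ (range k \ S).card ≤ S₀.card) →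
      (∀ S ∈ F, ∀ T ∈ F,
        ∃ A ∈ ({S, range k \ S} : Set (Finset ℕ)),
          ∃ B ∈ ({T, range k \ T} : Set (Finset ℕ)), A ⊆ B) →
      ∀ S ∈ F, ∀ T ∈ F,
        (if S ⊆ S₀ then S else range k \ S) ⊆ (if T ⊆ S₀ then T else range k \ T) ∨
        (if T ⊆ S₀ then T else range k \ T) ⊆ (if S ⊆ S₀ then S else range k \ S) ∨
        Disjoint (if S ⊆ S₀ then S else range k \ S)
          (if T ⊆ S₀ then T else range k \ T)) := by
  constructor
  · constructor
    · -- forward: construct c from a maximal side S₀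
      intro hlam
      rcases F.eq_empty_or_nonempty with rfl | hFne
      · exact ⟨id, by simp, by simp⟩
      · set G : Finset (Finset ℕ) := F ∪ F.image (fun S => range k \ S) with hG
        have hGne : G.Nonempty := hFne.mono subset_union_left
        obtain ⟨S₀, hS₀G, hmax'⟩ := G.exists_max_image Finset.card hGne
        have hmem : S₀ ∈ F ∨ range k \ S₀ ∈ F := by
          rcases Finset.mem_union.1 hS₀G with h | h
          · exact Or.inl h
          · obtain ⟨S, hS, rfl⟩ := Finset.mem_image.1 h
            right
            rw [sdiff_sdiff_right_self, inf_eq_inter, (inter_eq_right).2 (hF S hS).1]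
            exact hS
        have hsub0 : S₀ ⊆ range k := by
          rcases Finset.mem_union.1 hS₀G with h | h
          · exact (hF S₀ h).1
          · obtain ⟨S, hS, rfl⟩ := Finset.mem_image.1 h
            exact sdiff_subset
        have hmax : ∀ S ∈ F, S.card ≤ S₀.card ∧ (range k \ S).card ≤ S₀.card := by
          intro S hS
          exact ⟨hmax' S (Finset.mem_union.2 (Or.inl hS)),
            hmax' _ (Finset.mem_union.2 (Or.inr (Finset.mem_image_of_mem _ hS)))⟩
        refine ⟨fun S => if S ⊆ S₀ then S else range k \ S, ?_, ?_⟩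
        · intro S hS
          simp only
          split_ifs
          · exact Or.inl rfl
          · exact Or.inr rfl
        · exact aux10 k F hF S₀ hmem hsub0 hmax hlam
    · -- backward: laminar family of chosen sides gives laminar bipartitions
      rintro ⟨c, hc1, hc2⟩ S hS T hT
      have hSr := (hF S hS).1
      have hTr := (hF T hT).1
      have hcSr : c S ⊆ range k := by
        rcases hc1 S hS with h | h <;> rw [h]
        · exact hSr
        · exact sdiff_subset
      have hcSmem : c S ∈ ({S, range k \ S} : Set (Finset ℕ)) := by
        rcases hc1 S hS with h | h <;> simp [h]
      have hcTmem : c T ∈ ({T, range k \ T} : Set (Finset ℕ)) := by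
        rcases hc1 T hT with h | h <;> simp [h]
      have hcScmem : range k \ c S ∈ ({S, range k \ S} : Set (Finset ℕ)) := by
        rcases hc1 S hS with h | h <;> rw [h]
        · exact Or.inr rfl
        · left
          rw [sdiff_sdiff_right_self, inf_eq_inter, (inter_eq_right).2 hSr]
      have hcTcmem : range k \ c T ∈ ({T, range k \ T} : Set (Finset ℕ)) := by
        rcases hc1 T hT with h | h <;> rw [h]
        · exact Or.inr rfl
        · left
          rw [sdiff_sdiff_right_self, inf_eq_inter, (inter_eq_right).2 hTr]
      rcases hc2 S hS T hT with h | h | h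
      · exact ⟨c S, hcSmem, c T, hcTmem, h⟩
      · exact ⟨range k \ c S, hcScmem, range k \ c T, hcTcmem,
          Finset.sdiff_subset_sdiff (Finset.Subset.refl _) h⟩
      · exact ⟨c S, hcSmem, range k \ c T, hcTcmem,
          Finset.subset_sdiff.2 ⟨hcSr, h⟩⟩
  · -- second part
    intro S₀ hmem hsub0 hmax hlam
    exact aux10 k F hF S₀ hmem hsub0 hmax hlam
end

section
/- Let k ≥ 2. The map sending a probability distribution θ on bipartitions of [k] (with laminar support) to the tuple (1 − ∑_{b={T,T̄} ∈ supp θ, S⊆T or S⊆T̄} θ_b)_{∅≠S⊊[k]} is injective. That is, a distribution on bipartitions is uniquely determined by, for each nonempty proper subset S, the total weight it places on bipartitions that 'split' S. -/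
open Finset

/-- A probability distribution on bipartitions of `[k]` (represented canonically by
the side containing `0`, with laminar support) is uniquely determined by the values
`1 - ∑_{b = {T,T̄} : S ⊆ T ∨ S ⊆ T̄} θ_b` over all nonempty proper subsets `S`. -/
theorem stmt12 (k : ℕ) (hk : 2 ≤ k) (θ₁ θ₂ : Finset ℕ → ℝ)
    (hb₁ : ∀ T, θ₁ T ≠ 0 → 0 ∈ T ∧ T ⊆ range k ∧ T ≠ range k)
    (hb₂ : ∀ T, θ₂ T ≠ 0 → 0 ∈ T ∧ T ⊆ range k ∧ T ≠ range k)
    (hnn₁ : ∀ T, 0 ≤ θ₁ T) (hnn₂ : ∀ T, 0 ≤ θ₂ T)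
    (hsum₁ : ∑ T ∈ (range k).powerset, θ₁ T = 1)
    (hsum₂ : ∑ T ∈ (range k).powerset, θ₂ T = 1)
    (hlam₁ : ∀ S T, θ₁ S ≠ 0 → θ₁ T ≠ 0 →
      ∃ A ∈ ({S, range k \ S} : Set (Finset ℕ)),
        ∃ B ∈ ({T, range k \ T} : Set (Finset ℕ)), A ⊆ B)
    (hlam₂ : ∀ S T, θ₂ S ≠ 0 → θ₂ T ≠ 0 →
      ∃ A ∈ ({S, range k \ S} : Set (Finset ℕ)),
        ∃ B ∈ ({T, range k \ T} : Set (Finset ℕ)), A ⊆ B)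
    (heq : ∀ S : Finset ℕ, S ⊆ range k → S.Nonempty → S ≠ range k →
      1 - ∑ T ∈ (range k).powerset.filter (fun T => S ⊆ T ∨ S ⊆ range k \ T), θ₁ T =
      1 - ∑ T ∈ (range k).powerset.filter (fun T => S ⊆ T ∨ S ⊆ range k \ T), θ₂ T) :
    θ₁ = θ₂ := by
  -- For S containing 0, the "split" sum reduces to the sum over supersets of S.
  have hred : ∀ (θ : Finset ℕ → ℝ),
      (∀ U, θ U ≠ 0 → 0 ∈ U ∧ U ⊆ range k ∧ U ≠ range k) →
      ∀ S : Finset ℕ, 0 ∈ S →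
      ∑ U ∈ (range k).powerset.filter (fun U => S ⊆ U ∨ S ⊆ range k \ U), θ U
        = ∑ U ∈ (range k).powerset.filter (fun U => S ⊆ U), θ U := by
    intro θ hb S h0S
    symm
    apply Finset.sum_subset
    · intro U hU
      simp only [mem_filter, mem_powerset] at hU ⊢
      exact ⟨hU.1, Or.inl hU.2⟩
    · intro U hU hnU
      by_contra hz
      have h0U : 0 ∈ U := (hb U hz).1
      simp only [mem_filter, mem_powerset] at hU hnU
      rcases hU.2 with h | h
      · exact hnU ⟨hU.1, h⟩
      · have := h h0S
        simp only [mem_sdiff] at this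
        exact this.2 h0U
  have key : ∀ n : ℕ, ∀ T : Finset ℕ, T ⊆ range k → (range k \ T).card ≤ n →
      θ₁ T = θ₂ T := by
    intro n
    induction n with
    | zero =>
      intro T hT hc
      have hTr : T = range k := by
        have h2 : range k \ T = ∅ := Finset.card_eq_zero.mp (Nat.le_zero.mp hc)
        exact Finset.Subset.antisymm hT (Finset.sdiff_eq_empty_iff_subset.mp h2)
      subst hTr
      have h1 : θ₁ (range k) = 0 := by
        by_contra h; exact (hb₁ _ h).2.2 rfl
      have h2 : θ₂ (range k) = 0 := by
        by_contra h; exact (hb₂ _ h).2.2 rfl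
      rw [h1, h2]
    | succ n ih =>
      intro T hT hc
      by_cases hTr : T = range k
      · subst hTr
        have h1 : θ₁ (range k) = 0 := by
          by_contra h; exact (hb₁ _ h).2.2 rfl
        have h2 : θ₂ (range k) = 0 := by
          by_contra h; exact (hb₂ _ h).2.2 rfl
        rw [h1, h2]
      by_cases h0 : 0 ∈ T
      · have hS : T.Nonempty := ⟨0, h0⟩
        have gEq : ∑ U ∈ (range k).powerset.filter (fun U => T ⊆ U), θ₁ U
            = ∑ U ∈ (range k).powerset.filter (fun U => T ⊆ U), θ₂ U := by
          have h := heq T hT hS hTr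
          rw [hred θ₁ hb₁ T h0, hred θ₂ hb₂ T h0] at h
          linarith
        have hTmem : T ∈ (range k).powerset.filter (fun U => T ⊆ U) := by
          simp [mem_filter, mem_powerset, hT]
        rw [← Finset.add_sum_erase _ θ₁ hTmem, ← Finset.add_sum_erase _ θ₂ hTmem] at gEq
        have hrest : ∑ U ∈ ((range k).powerset.filter (fun U => T ⊆ U)).erase T, θ₁ U
            = ∑ U ∈ ((range k).powerset.filter (fun U => T ⊆ U)).erase T, θ₂ U := by
          apply Finset.sum_congr rfl
          intro U hU
          have hne : U ≠ T := Finset.ne_of_mem_erase hU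
          have hU' := Finset.mem_of_mem_erase hU
          simp only [mem_filter, mem_powerset] at hU'
          apply ih U hU'.1
          have hss : T ⊂ U := lt_of_le_of_ne hU'.2 (Ne.symm hne)
          have hcU : (range k \ U).card = k - U.card := by
            rw [Finset.card_sdiff_of_subset hU'.1, Finset.card_range]
          have hcT : (range k \ T).card = k - T.card := by
            rw [Finset.card_sdiff_of_subset hT, Finset.card_range]
          have hlt : T.card < U.card := Finset.card_lt_card hss
          have hUk : U.card ≤ k := by
            have := Finset.card_le_card hU'.1
            simpa using this
          omega
        have := gEq
        linarith
      · have h1 : θ₁ T = 0 := by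
          by_contra h; exact h0 (hb₁ _ h).1
        have h2 : θ₂ T = 0 := by
          by_contra h; exact h0 (hb₂ _ h).1
        rw [h1, h2]
  funext T
  by_cases hT : T ⊆ range k
  · exact key (range k \ T).card T hT le_rfl
  · have h1 : θ₁ T = 0 := by
      by_contra h; exact hT (hb₁ _ h).2.1
    have h2 : θ₂ T = 0 := by
      by_contra h; exact hT (hb₂ _ h).2.1
    rw [h1, h2]
end

section
/- For γ ∈ [3/4, 1], the eigenvalue distribution p = (γ/3, γ/3, γ/3, 1−γ) is sorted in nonincreasing order, its product is c = (γ/3)³(1−γ), and its entropy H(p) = −γ log₂(γ/3) − (1−γ)log₂(1−γ) equals the maximum entropy over all probability distributions q on 4 outcomes with ∏ q_i ≤ c. In particular, for k = 4 and c = (γ/3)³(1−γ) < (1/4)⁴, the maximizer in the determinant-constrained entropy problem is achieved at the bimodal point with three equal large entries and one small entry. -/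
open Real

/-- The eigenvalue distribution `(γ/3, γ/3, γ/3, 1-γ)` of the Werner purification. -/
noncomputable def pdist (γ : ℝ) : Fin 4 → ℝ := ![γ / 3, γ / 3, γ / 3, 1 - γ]

set_option maxHeartbeats 1000000

section st17aux




lemma st17_phi_anti {σ s t : ℝ} (h0 : 0 < σ) (h1 : σ/3 ≤ s) (h2 : s ≤ t) (h3 : t ≤ σ/2) :
    t^2*(σ-2*t) ≤ s^2*(σ-2*s) := by
  nlinarith [mul_nonneg (sub_nonneg.2 h2) (sub_nonneg.2 h2), sq_nonneg (s-t), sq_nonneg (s+t),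
    mul_nonneg (sub_nonneg.2 h2) (sub_nonneg.2 h1)]

lemma st17_phi_anti_strict {σ s t : ℝ} (h0 : 0 < σ) (h1 : σ/3 ≤ s) (h2 : s < t) (h3 : t ≤ σ/2) :
    t^2*(σ-2*t) < s^2*(σ-2*s) := by
  nlinarith [mul_pos (sub_pos.2 h2) (sub_pos.2 h2), sq_nonneg (s-t), sq_nonneg (s+t),
    mul_pos (sub_pos.2 h2) (show (0:ℝ) < 2*t + s by nlinarith)]

lemma st17_chi_anti {σ s t : ℝ} (h0 : 0 < σ) (h1 : σ/3 ≤ s) (h2 : s < t) (h3 : t ≤ σ) :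
    t*(σ-t)^2 < s*(σ-s)^2 := by
  have hst : (s+t-σ)^2 < s*t := by
    rcases le_or_gt (s+t-σ) 0 with h|h
    · nlinarith [sq_nonneg (s+t-σ)]
    · nlinarith
  nlinarith [sub_pos.2 h2]

lemma st17_amgm3_strict {x y z : ℝ} (hz : 0 < z) (hzy : z ≤ y) (hyx : y < x) :
    27*(x*y*z) < (x+y+z)^3 := by
  nlinarith [sq_nonneg (x-y), sq_nonneg (y-z), sq_nonneg (x-z), mul_pos hz (sub_pos.2 hyx),
    mul_pos (hz.trans_le hzy) (sub_pos.2 hyx), sq_nonneg (x+y+z), mul_pos hz (hz.trans_le (hzy.trans hyx.le))]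

lemma st17_E_pos {t Y Z : ℝ} (hZ : 0 < Z) (hZY : Z < Y) (hYt : Y < t) :
    0 < t*log t*(Y-Z) - Y*log Y*(t-Z) + Z*log Z*(t-Y) := by
  have htZ : 0 < t - Z := by linarith
  have htY : 0 < t - Y := by linarith
  have hYZ : 0 < Y - Z := by linarith
  have h := Real.strictConvexOn_mul_log.2 (Set.mem_Ici.2 hZ.le)
    (Set.mem_Ici.2 (by linarith : (0:ℝ) ≤ t)) (by linarith : Z ≠ t)
    (show 0 < (t-Y)/(t-Z) by positivity)
    (show 0 < (Y-Z)/(t-Z) by positivity)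
    (by field_simp; ring)
  simp only [smul_eq_mul] at h
  rw [show (t-Y)/(t-Z) * Z + (Y-Z)/(t-Z) * t = Y by field_simp; ring] at h
  have h2 := mul_lt_mul_of_pos_right h htZ
  have e1 : ((t-Y)/(t-Z) * (Z * log Z) + (Y-Z)/(t-Z) * (t * log t)) * (t-Z)
      = (t-Y) * (Z * log Z) + (Y-Z) * (t * log t) := by
    field_simp
  nlinarith [h2, e1]

lemma st17_deriv_neg {σ pr t : ℝ} (hσ : 0 < σ) (hpr : 0 < pr) (ht3 : σ/3 < t) (htσ : t < σ)
    (hΔt : 0 < (σ - t)^2 - 4*pr/t) (hφ : t^2*(σ-2*t) < pr) :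
    deriv (fun s => Real.negMulLog s + Real.negMulLog ((σ - s + Real.sqrt ((σ - s)^2 - 4*pr/s))/2)
      + Real.negMulLog ((σ - s - Real.sqrt ((σ - s)^2 - 4*pr/s))/2)) t < 0 := by
  have ht0 : 0 < t := by linarith
  obtain ⟨w, hwdef⟩ : ∃ w : ℝ, w = Real.sqrt ((σ - t)^2 - 4*pr/t) := ⟨_, rfl⟩
  have hw0 : 0 < w := by rw [hwdef]; exact Real.sqrt_pos.2 hΔt
  have hw2 : w^2 = (σ - t)^2 - 4*pr/t := by rw [hwdef]; exact Real.sq_sqrt hΔt.le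
  obtain ⟨A, hAdef⟩ : ∃ A : ℝ, A = (σ - t + w)/2 := ⟨_, rfl⟩
  obtain ⟨B, hBdef⟩ : ∃ B : ℝ, B = (σ - t - w)/2 := ⟨_, rfl⟩
  have hσt : 0 < σ - t := by linarith
  have hwσt : w < σ - t := by nlinarith [div_pos (by positivity : (0:ℝ) < 4*pr) ht0]
  have hB0 : 0 < B := by rw [hBdef]; linarith
  have hBA : B < A := by rw [hAdef, hBdef]; linarith
  have hA0 : 0 < A := by linarith
  have hAB : A * B = pr/t := by
    have : A * B = ((σ-t)^2 - w^2)/4 := by rw [hAdef, hBdef]; ring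
    rw [this, hw2]; ring
  have hprt : pr = t*(A*B) := by rw [hAB]; field_simp
  have hσAB : σ - t = A + B := by rw [hAdef, hBdef]; ring
  have hwAB : w = A - B := by rw [hAdef, hBdef]; ring
  -- A < t
  have hAt : A < t := by
    have h3tσ : 0 < 3*t - σ := by linarith
    have hw3t : w < 3*t - σ := by
      have : w^2 < (3*t-σ)^2 := by
        rw [hw2]
        have : 4*t*(σ-2*t) < 4*pr/t*1 := by
          rw [div_mul_eq_mul_div, lt_div_iff₀ ht0]; nlinarith
        nlinarith
      nlinarith
    rw [hAdef]; linarith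
  have hE := st17_E_pos hB0 hBA hAt
  -- derivatives
  have hΔ' : HasDerivAt (fun s : ℝ => (σ - s)^2 - 4*pr/s) (-2*(σ-t) + 4*pr/t^2) t := by
    have h1 : HasDerivAt (fun s : ℝ => (σ - s)^2) (-2*(σ-t)) t := by
      have := (((hasDerivAt_id t).const_sub σ)).pow 2
      simpa [Pi.pow_def] using this
    have h2 : HasDerivAt (fun s : ℝ => 4*pr/s) (-(4*pr)/t^2) t := by
      have := (hasDerivAt_const t (4*pr)).div (hasDerivAt_id t) ht0.ne'
      simp only [Pi.div_def, id] at this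
      exact this.congr_deriv (by ring)
    have := h1.sub h2
    exact this.congr_deriv (by ring)
  have hW' : HasDerivAt (fun s : ℝ => Real.sqrt ((σ - s)^2 - 4*pr/s))
      (1/(2*w) * (-2*(σ-t) + 4*pr/t^2)) t := by
    have := (Real.hasDerivAt_sqrt hΔt.ne').comp t hΔ'
    rw [← hwdef] at this
    simpa [Function.comp_def] using this
  have hA' : HasDerivAt (fun s : ℝ => (σ - s + Real.sqrt ((σ - s)^2 - 4*pr/s))/2)
      ((-1 + 1/(2*w) * (-2*(σ-t) + 4*pr/t^2))/2) t := by
    have h0 : HasDerivAt (fun s : ℝ => σ - s) (-1) t := by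
      simpa using (hasDerivAt_id t).const_sub σ
    exact (h0.add hW').div_const 2
  have hB' : HasDerivAt (fun s : ℝ => (σ - s - Real.sqrt ((σ - s)^2 - 4*pr/s))/2)
      ((-1 - 1/(2*w) * (-2*(σ-t) + 4*pr/t^2))/2) t := by
    have h0 : HasDerivAt (fun s : ℝ => σ - s) (-1) t := by
      simpa using (hasDerivAt_id t).const_sub σ
    exact (h0.sub hW').div_const 2
  have hnA : HasDerivAt (fun s : ℝ => Real.negMulLog ((σ - s + Real.sqrt ((σ - s)^2 - 4*pr/s))/2))
      ((-Real.log A - 1) * ((-1 + 1/(2*w) * (-2*(σ-t) + 4*pr/t^2))/2)) t := by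
    have hpt : HasDerivAt Real.negMulLog (-Real.log A - 1)
        ((σ - t + Real.sqrt ((σ - t)^2 - 4*pr/t))/2) := by
      rw [← hwdef, ← hAdef]
      exact Real.hasDerivAt_negMulLog hA0.ne'
    simpa [Function.comp_def] using hpt.comp t hA'
  have hnB : HasDerivAt (fun s : ℝ => Real.negMulLog ((σ - s - Real.sqrt ((σ - s)^2 - 4*pr/s))/2))
      ((-Real.log B - 1) * ((-1 - 1/(2*w) * (-2*(σ-t) + 4*pr/t^2))/2)) t := by
    have hpt : HasDerivAt Real.negMulLog (-Real.log B - 1)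
        ((σ - t - Real.sqrt ((σ - t)^2 - 4*pr/t))/2) := by
      rw [← hwdef, ← hBdef]
      exact Real.hasDerivAt_negMulLog hB0.ne'
    simpa [Function.comp_def] using hpt.comp t hB'
  have hψ' : HasDerivAt (fun s => Real.negMulLog s
      + Real.negMulLog ((σ - s + Real.sqrt ((σ - s)^2 - 4*pr/s))/2)
      + Real.negMulLog ((σ - s - Real.sqrt ((σ - s)^2 - 4*pr/s))/2))
      ((-Real.log t - 1) + (-Real.log A - 1) * ((-1 + 1/(2*w) * (-2*(σ-t) + 4*pr/t^2))/2)
        + (-Real.log B - 1) * ((-1 - 1/(2*w) * (-2*(σ-t) + 4*pr/t^2))/2)) t :=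
    ((Real.hasDerivAt_negMulLog ht0.ne').add hnA).add hnB
  rw [hψ'.deriv]
  -- now the sign
  have hval : (-Real.log t - 1) + (-Real.log A - 1) * ((-1 + 1/(2*w) * (-2*(σ-t) + 4*pr/t^2))/2)
        + (-Real.log B - 1) * ((-1 - 1/(2*w) * (-2*(σ-t) + 4*pr/t^2))/2)
      = -(t*Real.log t*(A-B) - A*Real.log A*(t-B) + B*Real.log B*(t-A)) / (t*(A-B)) := by
    rw [hσAB, hprt, hwAB]
    have htne : t ≠ 0 := ht0.ne'
    have hABne : A - B ≠ 0 := by linarith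
    field_simp
    ring
  rw [hval]
  apply div_neg_of_neg_of_pos
  · linarith
  · exact mul_pos ht0 (by linarith)

/-- Key mixing lemma: a positive triple with strictly largest element can be replaced by
`(r, r, v)` with the same sum and product and strictly larger entropy. -/
lemma st17_key {x y z : ℝ} (hz : 0 < z) (hzy : z ≤ y) (hyx : y < x) :
    ∃ r v : ℝ, 0 < r ∧ 0 < v ∧ 2*r + v = x + y + z ∧ r^2*v = x*y*z ∧
      negMulLog x + negMulLog y + negMulLog z < 2*negMulLog r + negMulLog v := by
  have hy : 0 < y := hz.trans_le hzy
  have hx : 0 < x := hy.trans hyx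
  obtain ⟨σ, hσdef⟩ : ∃ σ : ℝ, σ = x + y + z := ⟨_, rfl⟩
  obtain ⟨pr, hprdef⟩ : ∃ p : ℝ, p = x * y * z := ⟨_, rfl⟩
  have hσ : 0 < σ := by rw [hσdef]; positivity
  have hpr : 0 < pr := by rw [hprdef]; positivity
  have hAM : 27 * pr < σ^3 := by rw [hσdef, hprdef]; exact st17_amgm3_strict hz hzy hyx
  -- existence of r by IVT
  have hφcont : ContinuousOn (fun t : ℝ => t^2*(σ-2*t)) (Set.Icc (σ/3) (σ/2)) := by fun_prop
  have hIVT := intermediate_value_Icc' (by linarith : σ/3 ≤ σ/2) hφcont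
  have e13 : (σ/3)^2*(σ-2*(σ/3)) = σ^3/27 := by ring
  have e12 : (σ/2)^2*(σ-2*(σ/2)) = 0 := by ring
  have hmem : pr ∈ Set.Icc ((σ/2)^2*(σ-2*(σ/2))) ((σ/3)^2*(σ-2*(σ/3))) := by
    constructor
    · rw [e12]; positivity
    · rw [e13]; linarith
  obtain ⟨r, hrIcc, hrval⟩ := hIVT hmem
  obtain ⟨hr3, hr2⟩ := hrIcc
  simp only at hrval
  have hr3' : σ/3 < r := by
    rcases eq_or_lt_of_le hr3 with h | h
    · exfalso; rw [← h, e13] at hrval; linarith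
    · exact h
  have hr2' : r < σ/2 := by
    rcases eq_or_lt_of_le hr2 with h | h
    · exfalso; rw [h, e12] at hrval; linarith
    · exact h
  have hr0 : 0 < r := by linarith
  obtain ⟨v, hvdef⟩ : ∃ v : ℝ, v = σ - 2*r := ⟨_, rfl⟩
  have hv : 0 < v := by rw [hvdef]; linarith
  have hrv : r^2*v = pr := by rw [hvdef]; exact hrval
  -- x > r
  have hx3 : σ/3 < x := by rw [hσdef]; linarith
  have hxr : r < x := by
    by_contra hcon
    push_neg at hcon
    have := st17_phi_anti hσ hx3.le hcon hr2
    -- gives r^2*(σ-2r) ≤ x^2*(σ-2x), i.e. pr ≤ x^2*(σ-2x)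
    rw [hrval] at this
    have hexp : σ - 2*x = y + z - x := by rw [hσdef]; ring
    rw [hexp, hprdef] at this
    nlinarith [mul_pos (sub_pos.2 hyx) (show 0 < x - z by linarith)]
  
  -- strict antitonicity of the path entropy
  have hψcont : ContinuousOn (fun s => negMulLog s
      + negMulLog ((σ - s + Real.sqrt ((σ - s)^2 - 4*pr/s))/2)
      + negMulLog ((σ - s - Real.sqrt ((σ - s)^2 - 4*pr/s))/2)) (Set.Icc r x) := by
    have htpos : ∀ s ∈ Set.Icc r x, s ≠ 0 := fun s hs => (lt_of_lt_of_le hr0 hs.1).ne'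
    have hΔc : ContinuousOn (fun s : ℝ => (σ - s)^2 - 4*pr/s) (Set.Icc r x) :=
      (((continuous_const.sub continuous_id).pow 2).continuousOn).sub
        (ContinuousOn.div continuousOn_const continuousOn_id htpos)
    have hWc : ContinuousOn (fun s : ℝ => Real.sqrt ((σ - s)^2 - 4*pr/s)) (Set.Icc r x) :=
      Real.continuous_sqrt.comp_continuousOn hΔc
    have hsc : ContinuousOn (fun s : ℝ => σ - s) (Set.Icc r x) :=
      (continuous_const.sub continuous_id).continuousOn
    have hAc : ContinuousOn (fun s : ℝ => (σ - s + Real.sqrt ((σ - s)^2 - 4*pr/s))/2)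
        (Set.Icc r x) := (hsc.add hWc).div_const 2
    have hBc : ContinuousOn (fun s : ℝ => (σ - s - Real.sqrt ((σ - s)^2 - 4*pr/s))/2)
        (Set.Icc r x) := (hsc.sub hWc).div_const 2
    exact ((Real.continuous_negMulLog.continuousOn).add
      (Real.continuous_negMulLog.comp_continuousOn hAc)).add
      (Real.continuous_negMulLog.comp_continuousOn hBc)
  have hanti : StrictAntiOn (fun s => negMulLog s
      + negMulLog ((σ - s + Real.sqrt ((σ - s)^2 - 4*pr/s))/2)
      + negMulLog ((σ - s - Real.sqrt ((σ - s)^2 - 4*pr/s))/2)) (Set.Icc r x) := by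
    apply strictAntiOn_of_deriv_neg (convex_Icc r x) hψcont
    intro t ht
    rw [interior_Icc] at ht
    obtain ⟨htr, htx⟩ := ht
    have ht0 : 0 < t := lt_trans hr0 htr
    have htσ : t < σ := by rw [hσdef]; linarith
    have ht3 : σ/3 < t := lt_trans hr3' htr
    have hxσ2 : 4*pr ≤ x*(σ-x)^2 := by
      rw [hprdef, hσdef]
      nlinarith [mul_nonneg hx.le (sq_nonneg (y-z))]
    have hchi := st17_chi_anti hσ (le_of_lt ht3) htx (show x ≤ σ by rw [hσdef]; linarith)
    have hΔt : 0 < (σ - t)^2 - 4*pr/t := by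
      have h5 : 4*pr/t < (σ-t)^2 := by rw [div_lt_iff₀ ht0]; nlinarith
      linarith
    have hφt : t^2*(σ-2*t) < pr := by
      rcases le_or_gt t (σ/2) with hc | hc
      · have := st17_phi_anti_strict hσ hr3 htr hc
        rw [hrval] at this
        exact this
      · nlinarith [pow_pos ht0 2]
    exact st17_deriv_neg hσ hpr ht3 htσ hΔt hφt
  have hlt := hanti (Set.left_mem_Icc.2 hxr.le) (Set.right_mem_Icc.2 hxr.le) hxr
  simp only at hlt
  have hΔxval : (σ - x)^2 - 4*pr/x = (y-z)^2 := by
    rw [hσdef, hprdef]; field_simp; ring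
  have hsx : Real.sqrt ((σ - x)^2 - 4*pr/x) = y - z := by
    rw [hΔxval]; exact Real.sqrt_sq (by linarith)
  have hΔrval : (σ - r)^2 - 4*pr/r = (3*r-σ)^2 := by
    rw [← hrval]; field_simp; ring
  have hsr : Real.sqrt ((σ - r)^2 - 4*pr/r) = 3*r - σ := by
    rw [hΔrval]; exact Real.sqrt_sq (by linarith)
  rw [hsx, hsr, show (σ - x + (y-z))/2 = y by rw [hσdef]; ring,
    show (σ - x - (y-z))/2 = z by rw [hσdef]; ring,
    show (σ - r + (3*r-σ))/2 = r by ring,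
    show (σ - r - (3*r-σ))/2 = σ - 2*r by ring, ← hvdef] at hlt
  rw [hprdef] at hrv
  refine ⟨r, v, hr0, hv, by rw [hvdef, hσdef]; ring, hrv, by linarith⟩

lemma st17_jensen3 {x y z : ℝ} (hx : 0 ≤ x) (hy : 0 ≤ y) (hz : 0 ≤ z) :
    negMulLog x + negMulLog y + negMulLog z ≤ negMulLog (x+y+z) + (x+y+z) * log 3 := by
  rcases eq_or_lt_of_le (by linarith : (0:ℝ) ≤ x + y + z) with h | h
  · have hx0 : x = 0 := by linarith
    have hy0 : y = 0 := by linarith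
    have hz0 : z = 0 := by linarith
    simp [hx0, hy0, hz0]
  · have hm : (y+z)/2 ∈ Set.Ici (0:ℝ) := by simp; linarith
    have h1 := Real.concaveOn_negMulLog.2 (Set.mem_Ici.2 hy) (Set.mem_Ici.2 hz)
      (by norm_num : (0:ℝ) ≤ 1/2) (by norm_num : (0:ℝ) ≤ 1/2) (by norm_num)
    have h2 := Real.concaveOn_negMulLog.2 (Set.mem_Ici.2 hx) hm
      (by norm_num : (0:ℝ) ≤ 1/3) (by norm_num : (0:ℝ) ≤ 2/3) (by norm_num)
    simp only [smul_eq_mul] at h1 h2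
    rw [show (1:ℝ)/2 * y + 1/2 * z = (y+z)/2 by ring] at h1
    rw [show (1:ℝ)/3 * x + 2/3 * ((y+z)/2) = (x+y+z)/3 by ring] at h2
    have h3 : negMulLog ((x+y+z)/3) = (negMulLog (x+y+z) + (x+y+z)*log 3)/3 := by
      unfold Real.negMulLog
      rw [Real.log_div (by linarith) (by norm_num)]
      ring
    linarith


noncomputable def st17G (u : ℝ) : ℝ := negMulLog u + negMulLog (1-u) + (1-u)*log 3

lemma st17_G_mono : MonotoneOn st17G (Set.Icc 0 (1/4)) := by
  apply monotoneOn_of_deriv_nonneg (convex_Icc _ _)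
  · apply ContinuousOn.add
    apply ContinuousOn.add
    · exact Real.continuous_negMulLog.continuousOn
    · exact (Real.continuous_negMulLog.comp (continuous_const.sub continuous_id)).continuousOn
    · exact ((continuous_const.sub continuous_id).mul continuous_const).continuousOn
  · rw [interior_Icc]
    intro u hu
    obtain ⟨hu0, hu4⟩ := hu
    apply DifferentiableAt.differentiableWithinAt
    apply DifferentiableAt.add
    apply DifferentiableAt.add
    · exact Real.differentiableAt_negMulLog hu0.ne'
    · exact (Real.differentiableAt_negMulLog (by linarith : (1:ℝ)-u ≠ 0)).comp u
        ((differentiable_const (1:ℝ)).sub differentiable_id).differentiableAt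
    · fun_prop
  · rw [interior_Icc]
    intro u hu
    obtain ⟨hu0, hu4⟩ := hu
    have h1u : (0:ℝ) < 1 - u := by linarith
    have hd : HasDerivAt st17G ((-log u - 1) + ((-log (1-u) - 1)*(-1)) + (-1)*log 3) u := by
      unfold st17G
      apply HasDerivAt.add
      apply HasDerivAt.add
      · exact Real.hasDerivAt_negMulLog hu0.ne'
      · exact (Real.hasDerivAt_negMulLog h1u.ne').comp u
          ((hasDerivAt_id u).const_sub 1)
      · simpa using ((hasDerivAt_id u).const_sub 1).mul_const (log 3)
    rw [hd.deriv]
    have hlog : log u + log 3 ≤ log (1-u) := by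
      rw [← Real.log_mul hu0.ne' (by norm_num)]
      apply Real.log_le_log (by positivity)
      linarith
    linarith

lemma st17_phi4 {s t : ℝ} (h1 : 1/4 ≤ s) (h2 : s < t) (h3 : t ≤ 1/3) :
    t^3*(1-3*t) < s^3*(1-3*s) := by
  have hs : (0:ℝ) < t - s := sub_pos.2 h2
  have h4 : (0:ℝ) ≤ 3*(s+t) - 3/2 := by linarith
  have h5 : (0:ℝ) < (s-t)^2 := by have := sub_ne_zero.2 h2.ne; positivity
  nlinarith [mul_pos hs h5, mul_nonneg (mul_nonneg hs.le h4) (add_nonneg (sq_nonneg s) (sq_nonneg t))]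

lemma st17_caseA {b : ℝ} (hb0 : 0 ≤ b) (hb4 : b ≤ 1/4) (w : Fin 4 → ℝ)
    (h0 : ∀ i, 0 ≤ w i) (h1 : w 0 + w 1 + w 2 + w 3 = 1) (hwb : w 0 ≤ b) :
    negMulLog (w 0) + negMulLog (w 1) + negMulLog (w 2) + negMulLog (w 3)
      ≤ negMulLog b + negMulLog (1-b) + (1-b)*log 3 := by
  have hj := st17_jensen3 (h0 1) (h0 2) (h0 3)
  have hsum : w 1 + w 2 + w 3 = 1 - w 0 := by linarith
  rw [hsum] at hj
  have hG := st17_G_mono (Set.mem_Icc.2 ⟨h0 0, le_trans hwb hb4⟩)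
    (Set.mem_Icc.2 ⟨hb0, hb4⟩) hwb
  unfold st17G at hG
  linarith

lemma st17_main {a b : ℝ} (ha4 : 1/4 ≤ a) (ha3 : a ≤ 1/3) (hb : b = 1 - 3*a)
    (q : Fin 4 → ℝ) (hq0 : ∀ i, 0 ≤ q i) (hq1 : ∑ i, q i = 1)
    (hqP : ∏ i, q i ≤ a^3*b) :
    ∑ i, negMulLog (q i) ≤ 3*negMulLog a + negMulLog b := by
  have hb0 : 0 ≤ b := by rw [hb]; linarith
  have hb4 : b ≤ 1/4 := by rw [hb]; linarith
  have ha0 : 0 < a := by linarith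
  have hNp : 3*negMulLog a + negMulLog b = negMulLog b + negMulLog (1-b) + (1-b)*log 3 := by
    have h3a : (1:ℝ) - b = 3*a := by rw [hb]; ring
    rw [h3a]
    unfold Real.negMulLog
    rw [Real.log_mul (by norm_num : (3:ℝ) ≠ 0) ha0.ne']
    ring
  obtain ⟨S, hSdef⟩ : ∃ S : Set (Fin 4 → ℝ),
      S = {q : Fin 4 → ℝ | (∀ i, 0 ≤ q i) ∧ ∑ i, q i = 1 ∧ ∏ i, q i ≤ a^3*b} := ⟨_, rfl⟩
  have hSeq : S = (⋂ i : Fin 4, {q : Fin 4 → ℝ | 0 ≤ q i}) ∩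
      ({q : Fin 4 → ℝ | ∑ i, q i = 1} ∩ {q : Fin 4 → ℝ | ∏ i, q i ≤ a^3*b}) := by
    rw [hSdef]; ext q; simp [Set.mem_iInter, Set.mem_setOf_eq]
  have hSclosed : IsClosed S := by
    rw [hSeq]
    refine IsClosed.inter (isClosed_iInter fun i => isClosed_le continuous_const (continuous_apply i))
      (IsClosed.inter (isClosed_eq (continuous_finset_sum _ fun i _ => continuous_apply i)
          continuous_const)
        (isClosed_le (continuous_finset_prod _ fun i _ => continuous_apply i) continuous_const))
  have hSsub : S ⊆ Set.pi Set.univ (fun _ : Fin 4 => Set.Icc (0:ℝ) 1) := by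
    rw [hSdef]; rintro q ⟨hq0', hq1', -⟩ i -
    refine ⟨hq0' i, ?_⟩
    calc q i ≤ ∑ j, q j := Finset.single_le_sum (fun j _ => hq0' j) (Finset.mem_univ i)
    _ = 1 := hq1'
  have hScompact : IsCompact S :=
    (isCompact_univ_pi fun _ => isCompact_Icc).of_isClosed_subset hSclosed hSsub
  have hp0 : (![a,a,a,b] : Fin 4 → ℝ) ∈ S := by
    rw [hSdef]
    refine ⟨?_, ?_, ?_⟩
    · intro i; fin_cases i <;> simp <;> linarith
    · simp [Fin.sum_univ_four]; linarith
    · simp [Fin.prod_univ_four]; nlinarith [le_refl (a^3*b)]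
  have hScont : ContinuousOn (fun q : Fin 4 → ℝ => ∑ i, negMulLog (q i)) S :=
    (continuous_finset_sum _ fun i _ =>
      Real.continuous_negMulLog.comp (continuous_apply i)).continuousOn
  obtain ⟨q₀, hq₀S, hq₀max⟩ := hScompact.exists_isMaxOn ⟨_, hp0⟩ hScont
  rw [isMaxOn_iff] at hq₀max
  have hq₀S' := hq₀S
  rw [hSdef] at hq₀S'
  obtain ⟨hq₀0, hq₀1, hq₀P⟩ := hq₀S'
  obtain ⟨e, he⟩ : ∃ e : Equiv.Perm (Fin 4), Monotone (q₀ ∘ e) :=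
    ⟨Tuple.sort q₀, Tuple.monotone_sort q₀⟩
  obtain ⟨w, hwdef⟩ : ∃ w : Fin 4 → ℝ, w = q₀ ∘ e := ⟨_, rfl⟩
  have hw0 : ∀ i, 0 ≤ w i := fun i => by rw [hwdef]; exact hq₀0 (e i)
  have hwmono : Monotone w := by rw [hwdef]; exact he
  have hw01 : w 0 ≤ w 1 := hwmono (by decide)
  have hw12 : w 1 ≤ w 2 := hwmono (by decide)
  have hw23 : w 2 ≤ w 3 := hwmono (by decide)
  have hwsum : w 0 + w 1 + w 2 + w 3 = 1 := by
    have : ∑ i, w i = ∑ i, q₀ i := by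
      rw [hwdef]; exact Equiv.sum_comp e q₀
    rw [Fin.sum_univ_four] at this
    rw [this]; exact hq₀1
  have hwprod : w 0 * w 1 * w 2 * w 3 ≤ a^3*b := by
    have : ∏ i, w i = ∏ i, q₀ i := by
      rw [hwdef]; exact Equiv.prod_comp e q₀
    rw [Fin.prod_univ_four] at this
    rw [this]; exact hq₀P
  have hwN : negMulLog (w 0) + negMulLog (w 1) + negMulLog (w 2) + negMulLog (w 3)
      = ∑ i, negMulLog (q₀ i) := by
    have : ∑ i, negMulLog (w i) = ∑ i, negMulLog (q₀ i) := by
      rw [hwdef]; exact Equiv.sum_comp e (fun i => negMulLog (q₀ i))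
    rw [Fin.sum_univ_four] at this
    exact this
  have hwN4 : negMulLog (w 0) + negMulLog (w 1) + negMulLog (w 2) + negMulLog (w 3)
      = negMulLog (q₀ 0) + negMulLog (q₀ 1) + negMulLog (q₀ 2) + negMulLog (q₀ 3) := by
    rw [hwN, Fin.sum_univ_four]
  have hq₀N : ∑ i, negMulLog (q₀ i) ≤ 3*negMulLog a + negMulLog b := by
    rcases le_or_gt (w 0) b with hcase | hcase
    · rw [← hwN, hNp]
      exact st17_caseA hb0 hb4 w hw0 hwsum hcase
    · exfalso
      have hw0p : 0 < w 0 := lt_of_le_of_lt hb0 hcase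
      have hw1p : 0 < w 1 := lt_of_lt_of_le hw0p hw01
      rcases lt_or_eq_of_le hw23 with hc1 | hc1
      · -- w 2 < w 3 : mix (w 3, w 2, w 1)
        obtain ⟨r, v, hr0, hv0, hsrv, hprv, hNlt⟩ := st17_key hw1p hw12 hc1
        have huS : (![w 0, r, r, v] : Fin 4 → ℝ) ∈ S := by
          rw [hSdef]
          refine ⟨?_, ?_, ?_⟩
          · intro i; fin_cases i <;> simp <;> positivity
          · simp [Fin.sum_univ_four]; linarith
          · simp [Fin.prod_univ_four]
            calc w 0 * r * r * v = (r^2*v) * w 0 := by ring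
            _ = (w 3 * w 2 * w 1) * w 0 := by rw [hprv]
            _ = w 0 * w 1 * w 2 * w 3 := by ring
            _ ≤ a^3*b := hwprod
        have hle := hq₀max _ huS
        simp only [Fin.sum_univ_four] at hle
        simp only [Matrix.cons_val_zero, Matrix.cons_val_one, Matrix.head_cons,
          Matrix.cons_val_two, Matrix.tail_cons, Matrix.cons_val_three] at hle
        rw [← hwN4] at hle
        linarith
      · rcases lt_or_eq_of_le hw12 with hc2 | hc2
        · -- w 1 < w 2 : mix (w 2, w 1, w 0)
          obtain ⟨r, v, hr0, hv0, hsrv, hprv, hNlt⟩ := st17_key hw0p hw01 hc2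
          have huS : (![r, r, v, w 3] : Fin 4 → ℝ) ∈ S := by
            rw [hSdef]
            refine ⟨?_, ?_, ?_⟩
            · intro i
              have := hw0 3
              fin_cases i <;> simp <;> positivity
            · simp [Fin.sum_univ_four]; linarith
            · simp [Fin.prod_univ_four]
              calc r * r * v * w 3 = (r^2*v) * w 3 := by ring
              _ = (w 2 * w 1 * w 0) * w 3 := by rw [hprv]
              _ = w 0 * w 1 * w 2 * w 3 := by ring
              _ ≤ a^3*b := hwprod
          have hle := hq₀max _ huS
          simp only [Fin.sum_univ_four] at hle
          simp only [Matrix.cons_val_zero, Matrix.cons_val_one, Matrix.head_cons,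
            Matrix.cons_val_two, Matrix.tail_cons, Matrix.cons_val_three] at hle
          rw [← hwN4] at hle
          linarith
        · -- w 1 = w 2 = w 3
          have hX4 : 1/4 ≤ w 3 := by
            rw [← hc1, ← hc2] at hwsum ⊢
            linarith
          have hXa : w 3 < a := by
            rw [← hc1, ← hc2] at hwsum
            rw [hb] at hcase
            linarith [hwmono (show (0:Fin 4) ≤ 3 by decide), hc1, hc2]
          have hphi := st17_phi4 hX4 hXa ha3
          rw [← hc1, ← hc2] at hwsum hwprod
          have hw0eq : w 0 = 1 - 3*(w 1) := by linarith
          rw [hw0eq] at hwprod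
          rw [hb] at hwprod
          rw [← hc1, ← hc2] at hphi
          nlinarith [hphi, hwprod]
  have := hq₀max q (by rw [hSdef]; exact ⟨hq0, hq1, hqP⟩)
  linarith

end st17aux

/-- For `γ ∈ [3/4, 1]` the distribution `(γ/3, γ/3, γ/3, 1-γ)` is sorted
nonincreasingly, has product `c = (γ/3)³(1-γ)`, and its entropy
`-γ log₂(γ/3) - (1-γ) log₂(1-γ)` is the maximum entropy among all probability
distributions on 4 outcomes with product at most `c`. -/
theorem stmt17 (γ : ℝ) (h1 : 3 / 4 ≤ γ) (h2 : γ ≤ 1) :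
    (∀ i j : Fin 4, i ≤ j → pdist γ j ≤ pdist γ i) ∧
    (∏ i, pdist γ i = (γ / 3) ^ 3 * (1 - γ)) ∧
    IsGreatest
      {x : ℝ | ∃ q : Fin 4 → ℝ, (∀ i, 0 ≤ q i) ∧ (∑ i, q i) = 1 ∧
        (∏ i, q i) ≤ (γ / 3) ^ 3 * (1 - γ) ∧
        x = -∑ i, q i * Real.logb 2 (q i)}
      (-∑ i, pdist γ i * Real.logb 2 (pdist γ i)) ∧
    (-∑ i, pdist γ i * Real.logb 2 (pdist γ i) =
      -γ * Real.logb 2 (γ / 3) - (1 - γ) * Real.logb 2 (1 - γ)) := by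
  have hconv : ∀ f : Fin 4 → ℝ,
      -∑ i, f i * Real.logb 2 (f i) = (∑ i, negMulLog (f i)) / Real.log 2 := by
    intro f
    rw [Finset.sum_div]
    rw [← Finset.sum_neg_distrib]
    congr 1
    funext i
    unfold Real.negMulLog Real.logb
    ring
  have hppos : ∀ i, 0 ≤ pdist γ i := by
    intro i; fin_cases i <;> simp [pdist] <;> linarith
  have hpsum : ∑ i, pdist γ i = 1 := by
    simp [pdist, Fin.sum_univ_four]; ring
  have hpprod : ∏ i, pdist γ i = (γ/3)^3 * (1-γ) := by
    rw [Fin.prod_univ_four]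
    show γ/3 * (γ/3) * (γ/3) * (1-γ) = _
    ring
  have hpN : ∑ i, negMulLog (pdist γ i) = 3*negMulLog (γ/3) + negMulLog (1-γ) := by
    simp [pdist, Fin.sum_univ_four]; ring
  refine ⟨?_, hpprod, ⟨⟨pdist γ, hppos, hpsum, le_of_eq hpprod, rfl⟩, ?_⟩, ?_⟩
  · intro i j hij
    fin_cases i <;> fin_cases j <;> simp_all [pdist] <;> first | rfl | linarith
  · rintro x ⟨q, hq0, hq1, hqP, rfl⟩
    rw [hconv q, hconv (pdist γ), hpN]
    have hmain := st17_main (show 1/4 ≤ γ/3 by linarith) (show γ/3 ≤ 1/3 by linarith)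
      (show 1-γ = 1 - 3*(γ/3) by ring) q hq0 hq1 hqP
    have hlog2 : 0 < Real.log 2 := Real.log_pos one_lt_two
    exact (div_le_div_iff_of_pos_right hlog2).2 hmain
  · rw [hconv (pdist γ), hpN]
    unfold Real.negMulLog Real.logb
    field_simp
    ring
end
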